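/- Let $a, a' \in \mathbb{C}^{d_1}$, $b, b' \in \mathbb{C}^{d_2}$, $c, c' \in \mathbb{C}^{d_3}$ and $\tilde a, \tilde a', \tilde b, \tilde b', \tilde c, \tilde c'$ unit vectors in other spaces. Suppose the three pairwise inner products of the product vectors $v_1 = a' \otimes b \otimes c$, $v_2 = a \otimes b' \otimes c$, $v_3 = a \otimes b \otimes c'$ are all nonzero and equal respectively to those of $\tilde v_1 = \tilde a' \otimes \tilde b \otimes \tilde c$, $\tilde v_2 = \tilde a \otimes \tilde b' \otimes \tilde c$, $\tilde v_3 = \tilde a \otimes \tilde b \otimes \tilde c'$, and all inner products are real. Then either $(\langle a, a'\rangle, \langle b, b'\rangle, \langle c, c'\rangle) = (\langle \tilde a, \tilde a'\rangle, \langle \tilde b, \tilde b'\rangle, \langle \tilde c, \tilde c'\rangle)$, or this triple equals the negation $(-\langle \tilde a, \tilde a'\rangle, -\langle \tilde b, \tilde b'\rangle, -\langle \tilde c, \tilde c'\rangle)$. -/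

import Mathlib

/-!
Since the inner product of product vectors factors, the three hypotheses say that
`x = ⟪a,a'⟫, y = ⟪b,b'⟫, z = ⟪c,c'⟫` and their tilde counterparts have the same pairwise
products `xy, xz, yz`, all nonzero. Then `x² = (xy)(xz)/(yz)` is determined, so `x` is
determined up to sign, and `y, z` follow from `x` by division.
-/

/-- Concrete tensor product of three real Euclidean vectors. Its inner product factors
componentwise. -/
noncomputable def tens3 {m n p : ℕ} (a : EuclideanSpace ℝ (Fin m))
    (b : EuclideanSpace ℝ (Fin n)) (c : EuclideanSpace ℝ (Fin p)) :
    EuclideanSpace ℝ (Fin m × Fin n × Fin p) :=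
  (WithLp.equiv 2 _).symm (fun q => a q.1 * b q.2.1 * c q.2.2)

theorem inner_tens3 {m n p : ℕ} (a a' : EuclideanSpace ℝ (Fin m))
    (b b' : EuclideanSpace ℝ (Fin n)) (c c' : EuclideanSpace ℝ (Fin p)) :
    inner ℝ (tens3 a b c) (tens3 a' b' c') = inner ℝ a a' * inner ℝ b b' * inner ℝ c c' := by
  simp only [tens3, PiLp.inner_apply, RCLike.inner_apply, conj_trivial,
    WithLp.equiv_symm_apply, Fintype.sum_prod_type]
  rw [Fintype.sum_mul_sum]
  simp only [Finset.sum_mul]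
  simp only [Finset.mul_sum]
  exact Fintype.sum_congr _ _ fun _ => Fintype.sum_congr _ _ fun _ =>
    Fintype.sum_congr _ _ fun _ => by ring

theorem eq_or_eq_neg_of_pairwise_mul_eq {R : Type*} [CommRing R] [NoZeroDivisors R]
    {x y z x' y' z' : R} (hxy : x * y ≠ 0) (hxz : x * z ≠ 0)
    (h₁₂ : x * y = x' * y') (h₁₃ : x * z = x' * z') (h₂₃ : y * z = y' * z') :
    (x, y, z) = (x', y', z') ∨ (x, y, z) = (-x', -y', -z') := by
  have hx : x ≠ 0 := left_ne_zero_of_mul hxy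
  have hyz : y * z ≠ 0 := mul_ne_zero (right_ne_zero_of_mul hxy) (right_ne_zero_of_mul hxz)
  have hsq : x * x = x' * x' := mul_right_cancel₀ hyz <| calc
    x * x * (y * z) = (x * y) * (x * z) := by ring
    _ = (x' * y') * (x' * z') := by rw [h₁₂, h₁₃]
    _ = x' * x' * (y * z) := by rw [h₂₃]; ring
  rcases mul_self_eq_mul_self_iff.mp hsq with rfl | rfl
  · left
    rw [mul_left_cancel₀ hx h₁₂, mul_left_cancel₀ hx h₁₃]
  · right
    rw [mul_left_cancel₀ hx (h₁₂.trans (neg_mul_neg _ _).symm),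
      mul_left_cancel₀ hx (h₁₃.trans (neg_mul_neg _ _).symm)]

theorem linked_triple_lemma_general
    {d1 d2 d3 e1 e2 e3 : ℕ}
    (a a' : EuclideanSpace ℝ (Fin d1)) (b b' : EuclideanSpace ℝ (Fin d2))
    (c c' : EuclideanSpace ℝ (Fin d3))
    (ta ta' : EuclideanSpace ℝ (Fin e1)) (tb tb' : EuclideanSpace ℝ (Fin e2))
    (tc tc' : EuclideanSpace ℝ (Fin e3))
    (ha : ‖a‖ = 1) (hb : ‖b‖ = 1) (hc : ‖c‖ = 1)
    (hta : ‖ta‖ = 1) (htb : ‖tb‖ = 1) (htc : ‖tc‖ = 1)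
    (h12ne : (inner ℝ (tens3 a' b c) (tens3 a b' c) : ℝ) ≠ 0)
    (h13ne : (inner ℝ (tens3 a' b c) (tens3 a b c') : ℝ) ≠ 0)
    (h12 : (inner ℝ (tens3 a' b c) (tens3 a b' c) : ℝ) =
      inner ℝ (tens3 ta' tb tc) (tens3 ta tb' tc))
    (h13 : (inner ℝ (tens3 a' b c) (tens3 a b c') : ℝ) =
      inner ℝ (tens3 ta' tb tc) (tens3 ta tb tc'))
    (h23 : (inner ℝ (tens3 a b' c) (tens3 a b c') : ℝ) =
      inner ℝ (tens3 ta tb' tc) (tens3 ta tb tc')) :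
    ((inner ℝ a a' : ℝ), (inner ℝ b b' : ℝ), (inner ℝ c c' : ℝ)) =
      ((inner ℝ ta ta' : ℝ), (inner ℝ tb tb' : ℝ), (inner ℝ tc tc' : ℝ)) ∨
    ((inner ℝ a a' : ℝ), (inner ℝ b b' : ℝ), (inner ℝ c c' : ℝ)) =
      (-(inner ℝ ta ta' : ℝ), -(inner ℝ tb tb' : ℝ), -(inner ℝ tc tc' : ℝ)) := by
  simp only [inner_tens3, real_inner_self_eq_norm_sq, ha, hb, hc, hta, htb, htc, one_pow,
    mul_one, one_mul, real_inner_comm a a', real_inner_comm b b', real_inner_comm ta ta',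
    real_inner_comm tb tb'] at h12ne h13ne h12 h13 h23
  exact eq_or_eq_neg_of_pairwise_mul_eq h12ne h13ne h12 h13 h23

/-- Linked-triple lemma: if the three pairwise inner products of
`v₁ = a'⊗b⊗c, v₂ = a⊗b'⊗c, v₃ = a⊗b⊗c'` are nonzero and equal to those of
`ṽ₁ = ã'⊗b̃⊗c̃, ṽ₂ = ã⊗b̃'⊗c̃, ṽ₃ = ã⊗b̃⊗c̃'`, then the triple
`(⟪a,a'⟫, ⟪b,b'⟫, ⟪c,c'⟫)` equals `(⟪ã,ã'⟫, ⟪b̃,b̃'⟫, ⟪c̃,c̃'⟫)` or its negation. -/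
theorem linked_triple_lemma
    {d1 d2 d3 e1 e2 e3 : ℕ}
    (a a' : EuclideanSpace ℝ (Fin d1)) (b b' : EuclideanSpace ℝ (Fin d2))
    (c c' : EuclideanSpace ℝ (Fin d3))
    (ta ta' : EuclideanSpace ℝ (Fin e1)) (tb tb' : EuclideanSpace ℝ (Fin e2))
    (tc tc' : EuclideanSpace ℝ (Fin e3))
    (ha : ‖a‖ = 1) (ha' : ‖a'‖ = 1) (hb : ‖b‖ = 1) (hb' : ‖b'‖ = 1)
    (hc : ‖c‖ = 1) (hc' : ‖c'‖ = 1)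
    (hta : ‖ta‖ = 1) (hta' : ‖ta'‖ = 1) (htb : ‖tb‖ = 1) (htb' : ‖tb'‖ = 1)
    (htc : ‖tc‖ = 1) (htc' : ‖tc'‖ = 1)
    (h12ne : (inner ℝ (tens3 a' b c) (tens3 a b' c) : ℝ) ≠ 0)
    (h13ne : (inner ℝ (tens3 a' b c) (tens3 a b c') : ℝ) ≠ 0)
    (h23ne : (inner ℝ (tens3 a b' c) (tens3 a b c') : ℝ) ≠ 0)
    (h12 : (inner ℝ (tens3 a' b c) (tens3 a b' c) : ℝ) =
      inner ℝ (tens3 ta' tb tc) (tens3 ta tb' tc))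
    (h13 : (inner ℝ (tens3 a' b c) (tens3 a b c') : ℝ) =
      inner ℝ (tens3 ta' tb tc) (tens3 ta tb tc'))
    (h23 : (inner ℝ (tens3 a b' c) (tens3 a b c') : ℝ) =
      inner ℝ (tens3 ta tb' tc) (tens3 ta tb tc')) :
    ((inner ℝ a a' : ℝ), (inner ℝ b b' : ℝ), (inner ℝ c c' : ℝ)) =
      ((inner ℝ ta ta' : ℝ), (inner ℝ tb tb' : ℝ), (inner ℝ tc tc' : ℝ)) ∨
    ((inner ℝ a a' : ℝ), (inner ℝ b b' : ℝ), (inner ℝ c c' : ℝ)) =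
      (-(inner ℝ ta ta' : ℝ), -(inner ℝ tb tb' : ℝ), -(inner ℝ tc tc' : ℝ)) :=
  linked_triple_lemma_general a a' b b' c c' ta ta' tb tb' tc tc' ha hb hc hta htb htc h12ne h13ne
    h12 h13 h23
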